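/- arXiv:0908.0903 — 2 statements merged into one kernel-verified Lean document; each statement's English description precedes it below -/
import Mathlib

section
/- Consider the standard moment map μ_K(z) = Σⱼ |zⱼ|² eⱼ* on ℂ^N and a subspace 𝔥 ⊆ ℝ^N with projection i* : (ℝ^N)* → 𝔥*. Fix a ∈ 𝔥* and suppose that for every coordinate subspace S = {z_{i₁} = ⋯ = z_{i_n} = 0} meeting Z = (i*∘μ_K)^{-1}(a), the corresponding coordinate subalgebra 𝔰 = span(e_{i₁},…,e_{i_n}) satisfies 𝔰 ∩ 𝔥 = 0. Then Z ∩ (ℂ×)^N ≠ ∅. -/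
/-!
Pick `z ∈ Z`, let `c = μ_K(z)` and let `I` be the set of coordinates where `z` vanishes.
Since `𝔰_I ∩ 𝔥 = 0`, we have `𝔰_I^⊥ + 𝔥^⊥ = (ℝ^N)*`, so some `d ∈ 𝔥^⊥` takes the value `1`
on every `e_i`, `i ∈ I`. Moving `c` in the direction `d` stays inside `V_a = c + 𝔥^⊥`, and for
small `t > 0` every coordinate of `c + t d` is positive; taking square roots of these
coordinates gives a point of `Z ∩ (ℂ^×)^N`.
-/

/-- The standard moment map μ_K(z) = Σⱼ |zⱼ|² eⱼ* on ℂ^N, valued in the dual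
of ℝ^N. -/
noncomputable def muK (N : ℕ) (z : Fin N → ℂ) : Module.Dual ℝ (Fin N → ℝ) :=
  ∑ j : Fin N, ‖z j‖ ^ 2 • LinearMap.proj j

open Filter Topology

theorem Subspace.exists_mem_dualAnnihilator_eqOn_of_inf_eq_bot {K V : Type*} [Field K]
    [AddCommGroup V] [Module K V] {S H : Submodule K V} (hSH : S ⊓ H = ⊥)
    (φ : Module.Dual K V) : ∃ β ∈ H.dualAnnihilator, ∀ x ∈ S, β x = φ x := by
  have hφ : φ ∈ S.dualAnnihilator ⊔ H.dualAnnihilator := by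
    rw [← Subspace.dualAnnihilator_inf_eq, hSH, Submodule.dualAnnihilator_bot]
    trivial
  obtain ⟨α, hα, β, hβ, rfl⟩ := Submodule.mem_sup.1 hφ
  refine ⟨β, hβ, fun x hx => ?_⟩
  simp [(Submodule.mem_dualAnnihilator α).1 hα x hx]

theorem exists_pos_forall_lt_add_mul {ι : Type*} [Finite ι] {c d : ι → ℝ}
    (hc : ∀ j, 0 ≤ c j) (hd : ∀ j, c j = 0 → 0 < d j) :
    ∃ t > 0, ∀ j, 0 < c j + t * d j := by
  have hev : ∀ j, ∀ᶠ t in 𝓝[>] (0 : ℝ), 0 < c j + t * d j := by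
    intro j
    rcases (hc j).eq_or_lt with hcj | hcj
    · filter_upwards [self_mem_nhdsWithin] with t (ht : 0 < t)
      rw [← hcj, zero_add]
      exact mul_pos ht (hd j hcj.symm)
    · have hlim : Tendsto (fun t : ℝ => c j + t * d j) (𝓝 0) (𝓝 (c j)) :=
        (continuous_const.add (continuous_id.mul continuous_const)).tendsto' 0 (c j) (by simp)
      exact nhdsWithin_le_nhds (hlim.eventually (lt_mem_nhds hcj))
  exact ((eventually_all.2 hev).and self_mem_nhdsWithin).exists.imp fun t ht => ⟨ht.2, ht.1⟩

theorem muK_apply_single {N : ℕ} (z : Fin N → ℂ) (j : Fin N) :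
    muK N z (Pi.single j 1) = ‖z j‖ ^ 2 := by
  simp [muK, Pi.single_apply]

theorem exists_muK_eq_of_pos {N : ℕ} (ℓ : Module.Dual ℝ (Fin N → ℝ))
    (hℓ : ∀ j, 0 < ℓ (Pi.single j 1)) :
    ∃ w : Fin N → ℂ, muK N w = ℓ ∧ ∀ j, w j ≠ 0 := by
  refine ⟨fun j => (Real.sqrt (ℓ (Pi.single j 1)) : ℂ), ?_, fun j => ?_⟩
  · refine LinearMap.pi_ext' fun j => LinearMap.ext_ring ?_
    simp [muK_apply_single, Real.sq_sqrt (hℓ j).le]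
  · exact Complex.ofReal_ne_zero.2 (Real.sqrt_ne_zero'.2 (hℓ j))

theorem stmt_13 {N : ℕ} (𝔥 : Submodule ℝ (Fin N → ℝ)) (a : Module.Dual ℝ 𝔥)
    (hZ : ∃ z : Fin N → ℂ, (muK N z).comp 𝔥.subtype = a)
    (htrans : ∀ I : Finset (Fin N),
      (∃ z : Fin N → ℂ, (muK N z).comp 𝔥.subtype = a ∧ ∀ i ∈ I, z i = 0) →
      Submodule.span ℝ ((fun i => (Pi.single i 1 : Fin N → ℝ)) '' I) ⊓ 𝔥 = ⊥) :
    ∃ z : Fin N → ℂ, (muK N z).comp 𝔥.subtype = a ∧ ∀ j, z j ≠ 0 := by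
  classical
  obtain ⟨z, hz⟩ := hZ
  set I := Finset.univ.filter fun j => z j = 0
  have hI : Submodule.span ℝ ((fun i => (Pi.single i 1 : Fin N → ℝ)) '' I) ⊓ 𝔥 = ⊥ :=
    htrans I ⟨z, hz, fun i hi => (Finset.mem_filter.1 hi).2⟩
  obtain ⟨β, hβ𝔥, hβI⟩ := Subspace.exists_mem_dualAnnihilator_eqOn_of_inf_eq_bot hI
    (∑ j, LinearMap.proj j)
  have hβ : ∀ j, ‖z j‖ ^ 2 = 0 → 0 < β (Pi.single j 1) := by
    intro j hj
    rw [hβI _ (Submodule.subset_span ⟨j, by simpa [I] using hj, rfl⟩)]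
    simp [Pi.single_apply]
  obtain ⟨t, -, ht⟩ := exists_pos_forall_lt_add_mul (fun j => sq_nonneg ‖z j‖) hβ
  obtain ⟨w, hw, hw0⟩ := exists_muK_eq_of_pos (muK N z + t • β) fun j => by
    simpa [muK_apply_single] using ht j
  refine ⟨w, ?_, hw0⟩
  ext h
  simp [hw, ← hz, (Submodule.mem_dualAnnihilator β).1 hβ𝔥 h h.2]
end

section
/- Let (M,ω) be a symplectic manifold with a free Hamiltonian action of a compact Lie group G with moment map μ, and let ξ be a regular value of μ fixed by the coadjoint action. Then on Z = μ^{-1}(ξ), the kernel of the restricted form ω|_Z at a point z equals the tangent space to the G-orbit through z: ker(ω|_{T_zZ}) = T_z(G·z). -/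
/-!
The orbit directions `O = {X_ε(z)}` form an isotropic subspace of `(E, ω_z)`, and the moment
map condition identifies `T_zZ = ker dμ_z` with its symplectic complement `Oᗮ`. For an isotropic
subspace of a nondegenerate reflexive form, the radical of the form restricted to `Oᗮ` is
`Oᗮ ∩ Oᗮᗮ = O`, since `Oᗮᗮ = O` in finite dimension.
-/

open LinearMap (BilinForm)

namespace LinearMap.BilinForm

variable {K V : Type*} [Field K] [AddCommGroup V] [Module K V] [FiniteDimensional K V]

theorem mem_orthogonal_and_forall_apply_eq_zero_iff_of_le_orthogonal {B : BilinForm K V}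
    (hB : B.Nondegenerate) (hB₀ : B.IsRefl) {W : Submodule K V} (hW : W ≤ B.orthogonal W)
    (v : V) : (v ∈ B.orthogonal W ∧ ∀ w ∈ B.orthogonal W, B v w = 0) ↔ v ∈ W := by
  constructor
  · rintro ⟨-, hv⟩
    rw [← orthogonal_orthogonal hB hB₀ W]
    exact fun w hw => hB₀ v w (hv w hw)
  · exact fun hv => ⟨hW hv, fun w hw => hw v hv⟩

end LinearMap.BilinForm

theorem stmt_16_general {E : Type*} [NormedAddCommGroup E] [NormedSpace ℝ E]
    [FiniteDimensional ℝ E]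
    {𝔤 : Type*} [AddCommGroup 𝔤] [Module ℝ 𝔤]
    (ω : E → E →ₗ[ℝ] E →ₗ[ℝ] ℝ)
    -- ω is skew-symmetric and nondegenerate:
    (hskew : ∀ m u v, ω m u v = -ω m v u)
    (hnd : ∀ m (u : E), u ≠ 0 → ∃ v : E, ω m u v ≠ 0)
    (X : 𝔤 →ₗ[ℝ] (E → E)) (μ : E → Module.Dual ℝ 𝔤)
    -- moment map condition:
    (hmom : ∀ (ε : 𝔤) (m v : E), ω m (X ε m) v = fderiv ℝ (fun p => μ p ε) m v)
    (z : E)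
    -- G preserves Z (from Ad*-invariance of ξ): orbit directions are tangent to Z:
    (horb : ∀ ε η : 𝔤, fderiv ℝ (fun p => μ p η) z (X ε z) = 0) :
    -- ker(ω|_{T_zZ}) = T_z(G·z):
    {v : E | (∀ ε : 𝔤, fderiv ℝ (fun p => μ p ε) z v = 0) ∧
        ∀ w : E, (∀ ε : 𝔤, fderiv ℝ (fun p => μ p ε) z w = 0) → ω z v w = 0} =
      {v : E | ∃ ε : 𝔤, v = X ε z} := by
  set B : BilinForm ℝ E := ω z
  set O : Submodule ℝ E := LinearMap.range (LinearMap.proj z ∘ₗ X)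
  have hrefl : B.IsRefl := fun u v h => by rw [hskew, h, neg_zero]
  have hnondeg : B.Nondegenerate := hrefl.nondegenerate_iff_separatingLeft.mpr fun u hu =>
    by_contra fun h => (hnd z u h).elim fun v hv => hv (hu v)
  have tangent_eq_orthogonal_orbit (v : E) :
      (∀ ε, fderiv ℝ (fun p => μ p ε) z v = 0) ↔ v ∈ B.orthogonal O := by
    simp [O, B, LinearMap.BilinForm.mem_orthogonal_iff, hmom]
  have orbit_isotropic : O ≤ B.orthogonal O := by
    rintro _ ⟨ε, rfl⟩
    exact (tangent_eq_orthogonal_orbit _).mp (horb ε)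
  ext v
  simp only [Set.mem_ofPred_eq, tangent_eq_orthogonal_orbit]
  rw [LinearMap.BilinForm.mem_orthogonal_and_forall_apply_eq_zero_iff_of_le_orthogonal
    hnondeg hrefl orbit_isotropic]
  simp [O, eq_comm]

theorem stmt_16 {E : Type*} [NormedAddCommGroup E] [NormedSpace ℝ E]
    [FiniteDimensional ℝ E]
    {𝔤 : Type*} [AddCommGroup 𝔤] [Module ℝ 𝔤] [FiniteDimensional ℝ 𝔤]
    (ω : E → E →ₗ[ℝ] E →ₗ[ℝ] ℝ)
    -- ω is skew-symmetric and nondegenerate: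
    (hskew : ∀ m u v, ω m u v = -ω m v u)
    (hnd : ∀ m (u : E), u ≠ 0 → ∃ v : E, ω m u v ≠ 0)
    (X : 𝔤 →ₗ[ℝ] (E → E)) (μ : E → Module.Dual ℝ 𝔤) (ξ : Module.Dual ℝ 𝔤)
    -- moment map condition:
    (hmom : ∀ (ε : 𝔤) (m v : E), ω m (X ε m) v = fderiv ℝ (fun p => μ p ε) m v)
    (z : E) (hz : μ z = ξ)
    -- ξ is a regular value of μ (at points of Z; stated at z):
    (hreg : ∀ φ : Module.Dual ℝ 𝔤, ∃ v : E, ∀ ε : 𝔤,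
      fderiv ℝ (fun p => μ p ε) z v = φ ε)
    -- the action is (locally) free at z:
    (hfree : ∀ ε : 𝔤, X ε z = 0 → ε = 0)
    -- G preserves Z (from Ad*-invariance of ξ): orbit directions are tangent to Z:
    (horb : ∀ ε η : 𝔤, fderiv ℝ (fun p => μ p η) z (X ε z) = 0) :
    -- ker(ω|_{T_zZ}) = T_z(G·z):
    {v : E | (∀ ε : 𝔤, fderiv ℝ (fun p => μ p ε) z v = 0) ∧
        ∀ w : E, (∀ ε : 𝔤, fderiv ℝ (fun p => μ p ε) z w = 0) → ω z v w = 0} =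
      {v : E | ∃ ε : 𝔤, v = X ε z} :=
  stmt_16_general ω hskew hnd X μ hmom z horb
end
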